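/- arXiv:1708.00887 — 6 statements merged into one kernel-verified Lean document; each statement's English description precedes it below -/
import Mathlib

section
/- If a(λ) = λ⁴ + a₁λ³ + a₂λ² + conj(a₁)λ + 1 equals λ⁻¹·det(ζ) for some ζ ∈ 𝒫₂, then λ⁻²·a(λ) ≥ 0 (is real and nonnegative) for all λ on the unit circle. -/
/-!
Write `λ = μ²` with `|μ| = 1`. On the unit circle `μ̄ = μ⁻¹`, and the entries of
`μ⁻³ ζ(μ²)` become `αμ̄ - ᾱμ`, `βμ̄ - γ⁻¹μ̄³ - γμ` and minus their conjugates, so this matrix is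
anti-hermitian and traceless. Its determinant `|αμ̄ - ᾱμ|² + |βμ̄ - γ⁻¹μ̄³ - γμ|²` is therefore
nonnegative, and it equals `μ⁻⁶ · λ a(λ) = λ⁻² a(λ)`.
-/

open Complex ComplexConjugate Matrix
open scoped ComplexOrder

theorem Matrix.det_fin_two_nonneg_of_conjTranspose_eq_neg_of_trace_eq_zero
    {A : Matrix (Fin 2) (Fin 2) ℂ} (hA : Aᴴ = -A) (htr : A.trace = 0) : 0 ≤ A.det := by
  have h00 : conj (A 0 0) = -A 0 0 := by simpa using congrFun (congrFun hA 0) 0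
  have h10 : A 1 0 = -conj (A 0 1) := by
    have : conj (A 1 0) = -A 0 1 := by simpa using congrFun (congrFun hA 0) 1
    rw [← map_neg, ← this, conj_conj]
  have h11 : A 1 1 = -A 0 0 := by
    rw [trace_fin_two] at htr
    linear_combination htr
  have hdet : A.det = ((normSq (A 0 0) + normSq (A 0 1) : ℝ) : ℂ) := by
    push_cast
    rw [normSq_eq_conj_mul_self, normSq_eq_conj_mul_self, det_fin_two, h11, h10, h00]
    ring
  rw [hdet]
  exact_mod_cast add_nonneg (normSq_nonneg _) (normSq_nonneg _)

noncomputable def zetaP₂ (α β : ℂ) (γ : ℝ) (lam : ℂ) : Matrix (Fin 2) (Fin 2) ℂ :=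
  !![α * lam - conj α * lam ^ 2, -(γ : ℂ)⁻¹ + β * lam - γ * lam ^ 2;
     γ * lam - conj β * lam ^ 2 + (γ : ℂ)⁻¹ * lam ^ 3, -α * lam + conj α * lam ^ 2]

noncomputable def quarticP₂ (α β : ℂ) (γ : ℝ) (lam : ℂ) : ℂ :=
  lam ^ 4
    + (-(conj α) ^ 2 - β * (γ : ℂ)⁻¹ - conj β * (γ : ℂ)) * lam ^ 3
    + (2 * α * conj α + β * conj β + (γ : ℂ) ^ 2 + (γ : ℂ)⁻¹ ^ 2) * lam ^ 2
    + conj (-(conj α) ^ 2 - β * (γ : ℂ)⁻¹ - conj β * (γ : ℂ)) * lam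
    + 1

theorem det_zetaP₂ (α β : ℂ) {γ : ℝ} (hγ : γ ≠ 0) (lam : ℂ) :
    (zetaP₂ α β γ lam).det = lam * quarticP₂ α β γ lam := by
  have : (γ : ℂ) ≠ 0 := ofReal_ne_zero.mpr hγ
  simp only [zetaP₂, quarticP₂, det_fin_two_of, map_sub, map_neg, map_mul, map_pow, map_inv₀,
    conj_conj, conj_ofReal]
  field_simp
  ring

theorem trace_zetaP₂ (α β : ℂ) (γ : ℝ) (lam : ℂ) : (zetaP₂ α β γ lam).trace = 0 := by
  simp [zetaP₂, trace_fin_two]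

theorem conjTranspose_smul_zetaP₂_sq (α β : ℂ) (γ : ℝ) {μ : ℂ} (hμ : ‖μ‖ = 1) :
    (μ⁻¹ ^ 3 • zetaP₂ α β γ (μ ^ 2))ᴴ = -(μ⁻¹ ^ 3 • zetaP₂ α β γ (μ ^ 2)) := by
  have hμ0 : μ ≠ 0 := norm_ne_zero_iff.mp (by simp [hμ])
  have hconj : conj μ = μ⁻¹ := (inv_eq_conj hμ).symm
  ext i j
  fin_cases i <;> fin_cases j <;>
    simp [zetaP₂, conjTranspose_apply, hconj] <;> field_simp <;> ring

theorem det_smul_zetaP₂_sq (α β : ℂ) {γ : ℝ} (hγ : γ ≠ 0) {μ : ℂ} (hμ : μ ≠ 0) :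
    (μ⁻¹ ^ 3 • zetaP₂ α β γ (μ ^ 2)).det = (μ ^ 2)⁻¹ ^ 2 * quarticP₂ α β γ (μ ^ 2) := by
  rw [det_smul, det_zetaP₂ α β hγ, Fintype.card_fin]
  field_simp

/-- For `a ∈ ℳ₂` (coming from a potential with parameters `α, β, γ`) and `λ` on
the unit circle, `λ⁻²·a(λ)` is a nonnegative real number. -/
theorem stmt_2 (α β : ℂ) (γ : ℝ) (hγ : 0 < γ) (lam : ℂ)
    (hlam : ‖lam‖ = 1) :
    ∃ r : ℝ, 0 ≤ r ∧
      lam⁻¹ ^ 2 * (lam ^ 4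
        + (-((starRingEnd ℂ) α) ^ 2 - β * (γ : ℂ)⁻¹ - (starRingEnd ℂ) β * (γ : ℂ)) * lam ^ 3
        + (2 * α * (starRingEnd ℂ) α + β * (starRingEnd ℂ) β + (γ : ℂ) ^ 2 + (γ : ℂ)⁻¹ ^ 2) * lam ^ 2
        + (starRingEnd ℂ) (-((starRingEnd ℂ) α) ^ 2 - β * (γ : ℂ)⁻¹ - (starRingEnd ℂ) β * (γ : ℂ)) * lam
        + 1) = (r : ℂ) := by
  obtain ⟨μ, rfl⟩ := IsAlgClosed.exists_pow_nat_eq lam (n := 2) two_pos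
  have hμ : ‖μ‖ = 1 := by
    rwa [norm_pow, pow_eq_one_iff_of_nonneg (norm_nonneg μ) two_ne_zero] at hlam
  have hnonneg := det_fin_two_nonneg_of_conjTranspose_eq_neg_of_trace_eq_zero
    (conjTranspose_smul_zetaP₂_sq α β γ hμ) (by rw [trace_smul, trace_zetaP₂, smul_zero])
  rw [det_smul_zetaP₂_sq α β hγ.ne' (norm_ne_zero_iff.mp (by simp [hμ]))] at hnonneg
  obtain ⟨r, hr, hr_eq⟩ := RCLike.nonneg_iff_exists_ofReal.mp hnonneg
  exact ⟨r, hr, hr_eq.symm⟩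
end

section
/- For each a ∈ ℳ₂ the isospectral set I(a) = {ζ ∈ 𝒫₂ | det ζ = λ·a(λ)}, identified with the set of parameters (α, β, γ) ∈ ℂ × ℂ × ℝ⁺ satisfying a₁ = -conj(α)² - βγ⁻¹ - conj(β)γ and a₂ = 2|α|² + |β|² + γ² + γ⁻², is a compact subset of ℂ × ℂ × ℝ⁺. In particular, on I(a) both γ and γ⁻¹ are bounded. -/
open Complex Set

/-! The quantity `a₂ = 2|α|² + |β|² + γ² + γ⁻²` is a sum of nonnegative squares, so on `I(a)` it
bounds `|α|`, `|β|`, `γ` and `γ⁻¹`; hence `I(a)` lies in a compact box on which `γ` stays away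
from `0`. The coefficient map `(α, β, γ) ↦ (a₁, a₂)` is continuous on the half-space `γ > 0`, so
`I(a)` is closed in that box and therefore compact. -/

theorem isCompact_inter_preimage_of_subset {X Y : Type*} [TopologicalSpace X] [T2Space X]
    [TopologicalSpace Y] {U K : Set X} {t : Set Y} {f : X → Y} (hK : IsCompact K)
    (hKU : K ⊆ U) (hf : ContinuousOn f U) (ht : IsClosed t) (hsub : U ∩ f ⁻¹' t ⊆ K) :
    IsCompact (U ∩ f ⁻¹' t) := by
  have hKt : U ∩ f ⁻¹' t = K ∩ f ⁻¹' t :=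
    Subset.antisymm (subset_inter hsub inter_subset_right) (inter_subset_inter_left _ hKU)
  rw [hKt]
  exact hK.of_isClosed_subset ((hf.mono hKU).preimage_isClosed_of_isClosed hK.isClosed ht)
    inter_subset_left

theorem le_of_sq_le_of_one_le {x r : ℝ} (hx : 0 ≤ x) (hxr : x ^ 2 ≤ r) (hr : 1 ≤ r) : x ≤ r := by
  nlinarith

/-- The coefficients `(a₁, a₂)` of `a(λ)` as functions of the parameters `(α, β, γ)`. -/
noncomputable def spectralCoeffs (p : ℂ × ℂ × ℝ) : ℂ × ℝ :=
  (-(starRingEnd ℂ p.1) ^ 2 - p.2.1 * (p.2.2 : ℂ)⁻¹ - starRingEnd ℂ p.2.1 * (p.2.2 : ℂ),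
    2 * ‖p.1‖ ^ 2 + ‖p.2.1‖ ^ 2 + p.2.2 ^ 2 + p.2.2⁻¹ ^ 2)

theorem continuousOn_spectralCoeffs : ContinuousOn spectralCoeffs {p | 0 < p.2.2} := by
  intro p hp
  have hγ : (p.2.2 : ℂ) ≠ 0 := ofReal_ne_zero.2 (ne_of_gt hp)
  refine ContinuousAt.continuousWithinAt ?_
  unfold spectralCoeffs
  fun_prop (disch := first | exact hγ | exact ne_of_gt hp)

def isospectralSet (a₁ : ℂ) (a₂ : ℝ) : Set (ℂ × ℂ × ℝ) :=
  {p | 0 < p.2.2 ∧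
    a₁ = -((starRingEnd ℂ) p.1) ^ 2 - p.2.1 * (p.2.2 : ℂ)⁻¹ - (starRingEnd ℂ) p.2.1 * (p.2.2 : ℂ) ∧
    a₂ = 2 * ‖p.1‖ ^ 2 + ‖p.2.1‖ ^ 2 + p.2.2 ^ 2 + p.2.2⁻¹ ^ 2}

theorem isospectralSet_eq (a₁ : ℂ) (a₂ : ℝ) :
    isospectralSet a₁ a₂ = {p | 0 < p.2.2} ∩ spectralCoeffs ⁻¹' {(a₁, a₂)} := by
  ext p
  simp only [isospectralSet, spectralCoeffs, mem_inter_iff, mem_ofPred_eq, mem_preimage,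
    mem_singleton_iff, Prod.mk.injEq, eq_comm]

def paramBox (r : ℝ) : Set (ℂ × ℂ × ℝ) :=
  Metric.closedBall 0 r ×ˢ Metric.closedBall 0 r ×ˢ Icc r⁻¹ r

theorem isCompact_paramBox (r : ℝ) : IsCompact (paramBox r) :=
  (isCompact_closedBall _ _).prod ((isCompact_closedBall _ _).prod isCompact_Icc)

theorem paramBox_subset {r : ℝ} (hr : 0 < r) : paramBox r ⊆ {p | 0 < p.2.2} :=
  fun _ hp => (inv_pos.2 hr).trans_le hp.2.2.1

theorem isospectralSet_subset_paramBox (a₁ : ℂ) (a₂ : ℝ) :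
    isospectralSet a₁ a₂ ⊆ paramBox (max a₂ 1) := by
  rintro ⟨α, β, γ⟩ ⟨hγ, -, h₂⟩
  have hle : ∀ x : ℝ, 0 ≤ x → x ^ 2 ≤ a₂ → x ≤ max a₂ 1 := fun x hx hxa =>
    le_of_sq_le_of_one_le hx (hxa.trans (le_max_left _ _)) (le_max_right _ _)
  have hsq := fun x : ℝ => sq_nonneg x
  have hγinv : γ⁻¹ ≤ max a₂ 1 := hle _ (inv_nonneg.2 hγ.le) (by nlinarith [hsq ‖α‖, hsq ‖β‖])
  refine ⟨?_, ?_, inv_le_of_inv_le₀ (by positivity) hγinv, ?_⟩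
  · simpa using hle _ (norm_nonneg α) (by nlinarith [hsq ‖β‖, hsq γ, hsq γ⁻¹])
  · simpa using hle _ (norm_nonneg β) (by nlinarith [hsq ‖α‖, hsq γ, hsq γ⁻¹])
  · exact hle _ hγ.le (by nlinarith [hsq ‖α‖, hsq ‖β‖, hsq γ⁻¹])

theorem isCompact_isospectralSet (a₁ : ℂ) (a₂ : ℝ) : IsCompact (isospectralSet a₁ a₂) := by
  have hsub := isospectralSet_subset_paramBox a₁ a₂
  rw [isospectralSet_eq] at hsub ⊢
  exact isCompact_inter_preimage_of_subset (isCompact_paramBox _)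
    (paramBox_subset (zero_lt_one.trans_le (le_max_right a₂ 1))) continuousOn_spectralCoeffs
    isClosed_singleton hsub

/-- The isospectral set `I(a)`, viewed as a set of parameters
`(α, β, γ) ∈ ℂ × ℂ × ℝ⁺`, is compact; in particular `γ` and `γ⁻¹` are bounded
on it. -/
theorem stmt_5 (a₁ : ℂ) (a₂ : ℝ) :
    IsCompact {p : ℂ × ℂ × ℝ | 0 < p.2.2 ∧
      a₁ = -((starRingEnd ℂ) p.1) ^ 2 - p.2.1 * (p.2.2 : ℂ)⁻¹
            - (starRingEnd ℂ) p.2.1 * (p.2.2 : ℂ) ∧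
      (a₂ : ℝ) = 2 * ‖p.1‖ ^ 2 + ‖p.2.1‖ ^ 2
            + p.2.2 ^ 2 + p.2.2⁻¹ ^ 2} ∧
    ∃ M : ℝ, ∀ p : ℂ × ℂ × ℝ,
      p ∈ {p : ℂ × ℂ × ℝ | 0 < p.2.2 ∧
        a₁ = -((starRingEnd ℂ) p.1) ^ 2 - p.2.1 * (p.2.2 : ℂ)⁻¹
              - (starRingEnd ℂ) p.2.1 * (p.2.2 : ℂ) ∧
        (a₂ : ℝ) = 2 * ‖p.1‖ ^ 2 + ‖p.2.1‖ ^ 2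
              + p.2.2 ^ 2 + p.2.2⁻¹ ^ 2} →
      p.2.2 ≤ M ∧ p.2.2⁻¹ ≤ M := by
  refine ⟨isCompact_isospectralSet a₁ a₂, max a₂ 1, fun p hp => ?_⟩
  have hγ := (isospectralSet_subset_paramBox a₁ a₂ hp).2.2
  exact ⟨hγ.2, inv_le_of_inv_le₀ (zero_lt_one.trans_le (le_max_right a₂ 1)) hγ.1⟩
end

section
/- With B(λ) = -γ⁻¹ + βλ - γλ² and C(λ) = γ - conj(β)λ + γ⁻¹λ², the determinant of the 3×3 matrix [[-γ⁻¹, -γ, βγ⁻² - conj(β)],[-γ, -γ⁻¹, conj(β)γ⁻² - β],[conj(β), β, 2(γ - γ⁻³)]] equals -2γ⁻¹ times the resultant of B and C. -/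
open Complex Matrix

theorem det_sylvester_quadratic {R : Type*} [CommRing R] (a₂ a₁ a₀ b₂ b₁ b₀ : R) :
    !![a₂, a₁, a₀, 0; 0, a₂, a₁, a₀; b₂, b₁, b₀, 0; 0, b₂, b₁, b₀].det =
      (a₂ * b₀ - a₀ * b₂) ^ 2 - (a₂ * b₁ - a₁ * b₂) * (a₁ * b₀ - a₀ * b₁) := by
  rw [det_succ_row_zero, Fin.sum_univ_four]
  simp only [det_fin_three, submatrix_apply, of_apply, Fin.succAbove, Fin.reduceLT, Fin.reduceSucc,
    Fin.reduceCastSucc, ↓reduceIte, cons_val, Fin.val_zero, Fin.val_one, Fin.val_two]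
  ring

/-- `h` stands for `γ⁻¹` and `c` for `conj β`. -/
theorem det_eq_neg_two_mul_det_sylvester {R : Type*} [CommRing R] (b c g h : R)
    (hgh : g * h = 1) :
    !![-h, -g, b * h ^ 2 - c; -g, -h, c * h ^ 2 - b; c, b, 2 * (g - h ^ 3)].det =
      -2 * h * !![-g, b, -h, 0; 0, -g, b, -h; h, -c, g, 0; 0, h, -c, g].det := by
  rw [det_sylvester_quadratic, det_fin_three]
  simp only [of_apply, cons_val]
  linear_combination (h * c ^ 2 + h * b ^ 2 - 2 * g * b * c - 2 * g * h ^ 2 + 2 * g ^ 3) * hgh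

/-- The determinant of the 3×3 matrix appearing in the Jacobian computation
equals `-2γ⁻¹` times the resultant of `B` and `C` (the determinant of the
Sylvester matrix). -/
theorem stmt_8 (β : ℂ) (γ : ℝ) (hγ : 0 < γ) :
    Matrix.det
      !![-(γ : ℂ)⁻¹, -(γ : ℂ), β * (γ : ℂ)⁻¹ ^ 2 - (starRingEnd ℂ) β;
         -(γ : ℂ), -(γ : ℂ)⁻¹, (starRingEnd ℂ) β * (γ : ℂ)⁻¹ ^ 2 - β;
         (starRingEnd ℂ) β, β, 2 * ((γ : ℂ) - (γ : ℂ)⁻¹ ^ 3)] =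
    -2 * (γ : ℂ)⁻¹ *
      Matrix.det
        !![-(γ : ℂ), β, -(γ : ℂ)⁻¹, 0;
           0, -(γ : ℂ), β, -(γ : ℂ)⁻¹;
           (γ : ℂ)⁻¹, -(starRingEnd ℂ) β, (γ : ℂ), 0;
           0, (γ : ℂ)⁻¹, -(starRingEnd ℂ) β, (γ : ℂ)] :=
  det_eq_neg_two_mul_det_sylvester _ _ _ _ (mul_inv_cancel₀ (ofReal_ne_zero.mpr hγ.ne'))
end

section
/- Two quadratic polynomials B(λ) = -γ⁻¹ + βλ - γλ² and C(λ) = γ - conj(β)λ + γ⁻¹λ² (with β ∈ ℂ, γ > 0) have a common complex root if and only if β² + conj(β)² - |β|²(γ² + γ⁻²) + γ⁴ + γ⁻⁴ - 2 = 0. -/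
/-!
Eliminating `λ` from two quadratics `a λ² + b λ + c` and `a' λ² + b' λ + c'` gives their resultant
`(a c' - a' c)² - (a b' - a' b)(b c' - b' c)`, which vanishes at a common root. Conversely, if it
vanishes then either `a b' - a' b ≠ 0` and `λ = -(a c' - a' c) / (a b' - a' b)` is a common root, or
the two quadratics are proportional and share every root of the first one. For `B` and `C` the
resultant is exactly the expression in the statement.
-/

open Complex

/-- The determinant of the Sylvester matrix of `a X² + b X + c` and `a' X² + b' X + c'`. -/
def quadraticResultant {R : Type*} [CommRing R] (a b c a' b' c' : R) : R :=
  (a * c' - a' * c) ^ 2 - (a * b' - a' * b) * (b * c' - b' * c)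

theorem quadraticResultant_eq_zero_of_common_root {R : Type*} [CommRing R] {a b c a' b' c' x : R}
    (hf : a * x ^ 2 + b * x + c = 0) (hg : a' * x ^ 2 + b' * x + c' = 0) :
    quadraticResultant a b c a' b' c' = 0 := by
  rw [quadraticResultant]
  set p := a * b' - a' * b
  set q := a * c' - a' * c
  -- The Bézout identity `Res = u f + v g` with `u`, `v` of degree at most one.
  linear_combination (p * a' * x + p * b' - a' * q) * hf + (a * q - b * p - p * a * x) * hg

theorem exists_common_root_of_quadraticResultant_eq_zero {K : Type*} [Field K] [IsAlgClosed K]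
    {a b c a' b' c' : K} (ha : a ≠ 0) (hres : quadraticResultant a b c a' b' c' = 0) :
    ∃ x, a * x ^ 2 + b * x + c = 0 ∧ a' * x ^ 2 + b' * x + c' = 0 := by
  rw [quadraticResultant] at hres
  set p := a * b' - a' * b
  set q := a * c' - a' * c
  by_cases hp : p = 0
  · have hq : q = 0 :=
      pow_eq_zero_iff two_ne_zero |>.mp (by linear_combination hres + (b * c' - b' * c) * hp)
    obtain ⟨x, hx⟩ := IsAlgClosed.exists_root (Polynomial.C a * .X ^ 2 + .C b * .X + .C c)
      (by rw [Polynomial.degree_quadratic ha]; decide)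
    simp only [Polynomial.IsRoot, Polynomial.eval_add, Polynomial.eval_mul, Polynomial.eval_C,
      Polynomial.eval_pow, Polynomial.eval_X] at hx
    refine ⟨x, hx, mul_left_cancel₀ ha ?_⟩
    linear_combination a' * hx + x * hp + hq
  · refine ⟨-q / p, ?_, ?_⟩
    · field_simp
      linear_combination a * hres
    · field_simp
      linear_combination a' * hres

theorem exists_common_root_quadratic_iff {K : Type*} [Field K] [IsAlgClosed K]
    {a : K} (ha : a ≠ 0) (b c a' b' c' : K) :
    (∃ x, a * x ^ 2 + b * x + c = 0 ∧ a' * x ^ 2 + b' * x + c' = 0) ↔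
      quadraticResultant a b c a' b' c' = 0 :=
  ⟨fun ⟨_, hf, hg⟩ => quadraticResultant_eq_zero_of_common_root hf hg,
    exists_common_root_of_quadraticResultant_eq_zero ha⟩

/-- `B(λ) = -γ⁻¹ + βλ - γλ²` and `C(λ) = γ - conj(β)λ + γ⁻¹λ²` have a common
complex root iff `β² + conj(β)² - |β|²(γ² + γ⁻²) + γ⁴ + γ⁻⁴ - 2 = 0`. -/
theorem stmt_9 (β : ℂ) (γ : ℝ) (hγ : 0 < γ) :
    (∃ lam : ℂ,
        -(γ : ℂ)⁻¹ + β * lam - (γ : ℂ) * lam ^ 2 = 0 ∧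
        (γ : ℂ) - (starRingEnd ℂ) β * lam + (γ : ℂ)⁻¹ * lam ^ 2 = 0) ↔
    β ^ 2 + ((starRingEnd ℂ) β) ^ 2
      - β * (starRingEnd ℂ) β * ((γ : ℂ) ^ 2 + (γ : ℂ)⁻¹ ^ 2)
      + (γ : ℂ) ^ 4 + (γ : ℂ)⁻¹ ^ 4 - 2 = 0 := by
  have hγ0 : (γ : ℂ) ≠ 0 := ofReal_ne_zero.mpr hγ.ne'
  have hres : quadraticResultant (-(γ : ℂ)) β (-(γ : ℂ)⁻¹) (γ : ℂ)⁻¹ (-(starRingEnd ℂ) β) γ =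
      β ^ 2 + ((starRingEnd ℂ) β) ^ 2 - β * (starRingEnd ℂ) β * ((γ : ℂ) ^ 2 + (γ : ℂ)⁻¹ ^ 2)
        + (γ : ℂ) ^ 4 + (γ : ℂ)⁻¹ ^ 4 - 2 := by
    rw [quadraticResultant]
    field_simp
    ring
  rw [← hres, ← exists_common_root_quadratic_iff (neg_ne_zero.mpr hγ0)]
  refine exists_congr fun lam => and_congr ?_ ?_ <;>
    constructor <;> intro h <;> linear_combination h
end

section
/- If a(λ) = (λ - λ₁)²(λ - conj(λ₁))² with λ₁ on the unit circle and λ₁ ∉ ℝ, then the isospectral set I(a) contains exactly one element, namely the off-diagonal potential ζ(λ) = [[0, -1],[λ, 0]]·(λ - λ₁)(λ - conj(λ₁)) corresponding to (α, β, γ) = (0, λ₁ + conj(λ₁), 1). -/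
/-!
The determinant of the potential of `(α, β, γ)` is `λ · a(λ)` with
`a₁ = -conj(α)² - β/γ - conj(β)γ` and `a₂ = 2|α|² + |β|² + γ² + γ⁻²`, while
`(λ - λ₁)²(λ - conj λ₁)² = (λ² - 2 Re(λ₁) λ + 1)²` has `a₁ = -4 Re λ₁`, `a₂ = 4 (Re λ₁)² + 2`.
Comparing coefficients, the real part of the `a₁`-equation is linear in `Re β`; squaring it and
substituting into the `a₂`-equation leaves a sum of terms that are nonnegative because
`|Re λ₁| < 1` and that vanishes, which forces `α = 0`, `Im β = 0` and `γ = 1`.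
-/

open Complex Matrix Polynomial

noncomputable section

def potential (α β : ℂ) (γ : ℝ) (lam : ℂ) : Matrix (Fin 2) (Fin 2) ℂ :=
  !![α * lam - (starRingEnd ℂ) α * lam ^ 2, -(γ : ℂ)⁻¹ + β * lam - (γ : ℂ) * lam ^ 2;
    (γ : ℂ) * lam - (starRingEnd ℂ) β * lam ^ 2 + (γ : ℂ)⁻¹ * lam ^ 3,
    -(α * lam) + (starRingEnd ℂ) α * lam ^ 2]

def spectralQuartic (a₁ : ℂ) (a₂ : ℝ) : ℂ[X] :=
  X ^ 4 + C a₁ * X ^ 3 + C (a₂ : ℂ) * X ^ 2 + C ((starRingEnd ℂ) a₁) * X + 1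

def spectralCoeff₁ (α β : ℂ) (γ : ℝ) : ℂ :=
  -(starRingEnd ℂ) α ^ 2 - β * (γ : ℂ)⁻¹ - (starRingEnd ℂ) β * γ

def spectralCoeff₂ (α β : ℂ) (γ : ℝ) : ℝ :=
  2 * normSq α + normSq β + γ ^ 2 + γ⁻¹ ^ 2

end

theorem Polynomial.eq_of_forall_mul_eval_eq {R : Type*} [CommRing R] [IsDomain R] [Infinite R]
    {p q : R[X]} (h : ∀ x, x * p.eval x = x * q.eval x) : p = q :=
  mul_left_cancel₀ X_ne_zero (funext fun x => by simpa using h x)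

theorem spectralQuartic_inj {a₁ b₁ : ℂ} {a₂ b₂ : ℝ} :
    spectralQuartic a₁ a₂ = spectralQuartic b₁ b₂ ↔ a₁ = b₁ ∧ a₂ = b₂ := by
  refine ⟨fun h => ⟨?_, ?_⟩, fun ⟨h₁, h₂⟩ => h₁ ▸ h₂ ▸ rfl⟩
  · simpa [spectralQuartic] using congrArg (coeff · 3) h
  · simpa [spectralQuartic] using congrArg (coeff · 2) h

theorem det_potential {α β : ℂ} {γ : ℝ} (hγ : γ ≠ 0) (lam : ℂ) :
    (potential α β γ lam).det =
      lam * (spectralQuartic (spectralCoeff₁ α β γ) (spectralCoeff₂ α β γ)).eval lam := by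
  have hγ' : (γ : ℂ) * (γ : ℂ)⁻¹ = 1 := mul_inv_cancel₀ (ofReal_ne_zero.2 hγ)
  simp only [potential, det_fin_two_of, spectralQuartic, eval_add, eval_mul, eval_pow, eval_X,
    eval_C, eval_one]
  simp only [spectralCoeff₁, spectralCoeff₂, map_sub, map_neg, map_mul, map_pow, conj_conj,
    conj_ofReal, map_inv₀]
  push_cast [normSq_eq_conj_mul_self]
  linear_combination (lam ^ 5 + lam) * hγ'

theorem spectralQuartic_double_conj_roots {l : ℂ} (hl : ‖l‖ = 1) (lam : ℂ) :
    (lam - l) ^ 2 * (lam - (starRingEnd ℂ) l) ^ 2 =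
      (spectralQuartic (-(4 * l.re) : ℝ) (4 * l.re ^ 2 + 2)).eval lam := by
  have hsum : l + (starRingEnd ℂ) l = 2 * l.re := by rw [add_conj]; push_cast; ring
  have hprod : l * (starRingEnd ℂ) l = 1 := by
    rw [mul_conj, normSq_eq_norm_sq, hl]; norm_num
  have hquadratic : (lam - l) * (lam - (starRingEnd ℂ) l) = lam ^ 2 - 2 * l.re * lam + 1 := by
    linear_combination (-lam) * hsum + hprod
  rw [← mul_pow, hquadratic]
  simp only [spectralQuartic, eval_add, eval_mul, eval_pow, eval_X, eval_C, eval_one, conj_ofReal]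
  push_cast
  ring

/- Eliminating `p` (square the first equation and use `(g + g⁻¹)² = (g - g⁻¹)² + 4`) leaves
a sum of nonnegative terms equal to zero. -/
theorem weighted_sum_sq_eq_zero_of_spectral_eqs {x y p q g R : ℝ} (hg : g ≠ 0)
    (h₁ : x ^ 2 - y ^ 2 + p * (g + g⁻¹) = 4 * R)
    (h₂ : 2 * (x ^ 2 + y ^ 2) + p ^ 2 + q ^ 2 + g ^ 2 + g⁻¹ ^ 2 = 4 * R ^ 2 + 2) :
    8 * (1 - R) * x ^ 2 + 8 * (1 + R) * y ^ 2 + (x ^ 2 - y ^ 2) ^ 2 + 4 * q ^ 2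
        + (4 - 4 * R ^ 2 + 2 * (x ^ 2 + y ^ 2) + q ^ 2) * (g - g⁻¹) ^ 2 + (g - g⁻¹) ^ 4 = 0 := by
  have hgg : g * g⁻¹ = 1 := mul_inv_cancel₀ hg
  linear_combination (x ^ 2 - y ^ 2 - p * (g + g⁻¹) - 4 * R) * h₁ + (g + g⁻¹) ^ 2 * h₂
    + (16 * R ^ 2 - 8 * x ^ 2 - 8 * y ^ 2 - 4 * q ^ 2 - 6 * g ^ 2 - 6 * g⁻¹ ^ 2 + 4 * g * g⁻¹) * hgg

theorem eq_of_spectral_eqs {x y p q g R : ℝ} (hR : R ^ 2 < 1) (hg : 0 < g)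
    (h₁ : x ^ 2 - y ^ 2 + p * (g + g⁻¹) = 4 * R)
    (h₂ : 2 * (x ^ 2 + y ^ 2) + p ^ 2 + q ^ 2 + g ^ 2 + g⁻¹ ^ 2 = 4 * R ^ 2 + 2) :
    x = 0 ∧ y = 0 ∧ q = 0 ∧ g = 1 ∧ p = 2 * R := by
  have hsum := weighted_sum_sq_eq_zero_of_spectral_eqs hg.ne' h₁ h₂
  have hR₁ : 0 < 1 - R := by nlinarith
  have hR₂ : 0 < 1 + R := by nlinarith
  have t₁ : 0 ≤ 8 * (1 - R) * x ^ 2 := by positivity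
  have t₂ : 0 ≤ 8 * (1 + R) * y ^ 2 := by positivity
  have t₃ : 0 ≤ (4 - 4 * R ^ 2 + 2 * (x ^ 2 + y ^ 2) + q ^ 2) * (g - g⁻¹) ^ 2 := by
    have : 0 ≤ 4 - 4 * R ^ 2 := by linarith
    positivity
  have t₄ : 0 ≤ (x ^ 2 - y ^ 2) ^ 2 := by positivity
  have t₅ : 0 ≤ 4 * q ^ 2 := by positivity
  have t₆ : 0 ≤ (g - g⁻¹) ^ 4 := by positivity
  have hx : x = 0 := by
    have : 8 * (1 - R) * x ^ 2 = 0 := by linarith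
    simpa [hR₁.ne'] using this
  have hy : y = 0 := by
    have : 8 * (1 + R) * y ^ 2 = 0 := by linarith
    simpa [hR₂.ne'] using this
  have hq : q = 0 := by
    have : 4 * q ^ 2 = 0 := by linarith
    simpa using this
  have hg₁ : g = 1 := by
    have hd : (g - g⁻¹) ^ 4 = 0 := by linarith
    have hgg : g * g⁻¹ = 1 := mul_inv_cancel₀ hg.ne'
    rw [← sub_eq_zero.1 (pow_eq_zero_iff four_ne_zero |>.1 hd)] at hgg
    exact (mul_self_eq_one_iff.1 hgg).resolve_right (by linarith)
  subst hx hy hq hg₁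
  refine ⟨rfl, rfl, rfl, rfl, by norm_num at h₁; linarith⟩

theorem spectralCoeff₁_re (α β : ℂ) (γ : ℝ) :
    (spectralCoeff₁ α β γ).re = -(α.re ^ 2 - α.im ^ 2 + β.re * (γ + γ⁻¹)) := by
  simp only [spectralCoeff₁, ← ofReal_inv, sub_re, neg_re, pow_two, mul_re, conj_re, conj_im,
    ofReal_re, ofReal_im]
  ring

theorem spectralCoeff₂_eq (α β : ℂ) (γ : ℝ) :
    spectralCoeff₂ α β γ = 2 * (α.re ^ 2 + α.im ^ 2) + β.re ^ 2 + β.im ^ 2 + γ ^ 2 + γ⁻¹ ^ 2 := by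
  simp only [spectralCoeff₂, normSq_apply]
  ring

theorem Complex.re_sq_lt_one {z : ℂ} (hz : ‖z‖ = 1) (him : z.im ≠ 0) : z.re ^ 2 < 1 := by
  have hnorm : z.re ^ 2 + z.im ^ 2 = 1 := by
    rw [sq, sq, ← normSq_apply, normSq_eq_norm_sq, hz, one_pow]
  nlinarith [sq_pos_of_ne_zero him]

theorem potential_isospectral_iff {α β : ℂ} {γ : ℝ} (hγ : γ ≠ 0) {l : ℂ} (hl : ‖l‖ = 1) :
    (∀ lam, (potential α β γ lam).det = lam * ((lam - l) ^ 2 * (lam - (starRingEnd ℂ) l) ^ 2)) ↔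
      spectralCoeff₁ α β γ = (-(4 * l.re) : ℝ) ∧ spectralCoeff₂ α β γ = 4 * l.re ^ 2 + 2 := by
  simp_rw [det_potential hγ, spectralQuartic_double_conj_roots hl, ← spectralQuartic_inj]
  exact ⟨Polynomial.eq_of_forall_mul_eval_eq, fun h lam => by rw [h]⟩

/-- For `a(λ) = (λ-l₁)²(λ-conj l₁)²` with `l₁` unital and non-real, the
isospectral set `I(a)` consists of exactly one point, the off-diagonal potential
with `(α, β, γ) = (0, l₁ + conj l₁, 1)`. -/
theorem stmt_10 (l₁ : ℂ) (h1 : ‖l₁‖ = 1) (h2 : l₁.im ≠ 0) :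
    {p : ℂ × ℂ × ℝ | 0 < p.2.2 ∧ ∀ lam : ℂ,
      Matrix.det
        !![p.1 * lam - (starRingEnd ℂ) p.1 * lam ^ 2,
            -(p.2.2 : ℂ)⁻¹ + p.2.1 * lam - (p.2.2 : ℂ) * lam ^ 2;
          (p.2.2 : ℂ) * lam - (starRingEnd ℂ) p.2.1 * lam ^ 2
            + (p.2.2 : ℂ)⁻¹ * lam ^ 3,
            -(p.1 * lam) + (starRingEnd ℂ) p.1 * lam ^ 2] =
      lam * ((lam - l₁) ^ 2 * (lam - (starRingEnd ℂ) l₁) ^ 2)} =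
    {(0, l₁ + (starRingEnd ℂ) l₁, 1)} := by
  ext ⟨α, β, γ⟩
  simp only [Set.mem_ofPred_eq, Set.mem_singleton_iff, Prod.mk.injEq]
  constructor
  · rintro ⟨hγ, hdet⟩
    obtain ⟨h₁, h₂⟩ := (potential_isospectral_iff hγ.ne' h1).1 hdet
    have h₁re := congrArg Complex.re h₁
    rw [spectralCoeff₁_re, ofReal_re] at h₁re
    rw [spectralCoeff₂_eq] at h₂
    obtain ⟨hx, hy, hq, rfl, hp⟩ := eq_of_spectral_eqs (re_sq_lt_one h1 h2) hγ (neg_inj.1 h₁re) h₂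
    refine ⟨ext hx hy, ext ?_ ?_, rfl⟩
    · rw [add_re, conj_re, hp]
      ring
    · rw [add_im, conj_im, hq, add_neg_cancel]
  · rintro ⟨rfl, rfl, rfl⟩
    refine ⟨one_pos, (potential_isospectral_iff one_ne_zero h1).2 ⟨?_, ?_⟩⟩
    · apply Complex.ext <;> simp [spectralCoeff₁]
      ring
    · rw [spectralCoeff₂, add_conj, normSq_ofReal]
      norm_num
      ring
end

section
/- Let ℘, ζ, be the Weierstrass functions for the degenerate lattice with ω = ∞, ω' = πi/2, so that ℘(z) = 1/3 + 1/sinh²(z) and ζ(z) = -z/3 + coth(z). Then with z₊ = πi/4 + t for t ∈ ℝ, the quantity τ̃ = (2η'z₊ - 2ω'ζ(z₊))/(πi) with η' = -πi/6 equals (i - tanh t)/(1 - i·tanh t); in particular |τ̃| = 1. -/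
open Complex Real

/-!
Since `η' = -ω'/3`, the linear part `-z/3` of `ζ` cancels against the `η'` term, so
`τ̃ = -coth z₊`. The addition formulas give `√2 cosh z₊ = cosh t + i sinh t` and
`√2 sinh z₊ = i (cosh t - i sinh t)`; dividing by `cosh t` turns `-coth z₊` into
`(i - tanh t)/(1 - i tanh t)`. For real `x`, `i - x = i · conj (1 - i x)`, so this
transform maps the real line to the unit circle.
-/

lemma cosh_pi_mul_I_div_four_add (t : ℂ) :
    cosh (π * I / 4 + t) = (√2 / 2 : ℝ) * (cosh t + I * sinh t) := by
  have h : (π * I / 4 : ℂ) = ((π / 4 : ℝ) : ℂ) * I := by push_cast; ring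
  rw [Complex.cosh_add, h, cosh_mul_I, sinh_mul_I, ← ofReal_cos, ← ofReal_sin,
    Real.cos_pi_div_four, Real.sin_pi_div_four]
  ring

lemma sinh_pi_mul_I_div_four_add (t : ℂ) :
    sinh (π * I / 4 + t) = (√2 / 2 : ℝ) * I * (cosh t - I * sinh t) := by
  have h : (π * I / 4 : ℂ) = ((π / 4 : ℝ) : ℂ) * I := by push_cast; ring
  rw [Complex.sinh_add, h, cosh_mul_I, sinh_mul_I, ← ofReal_cos, ← ofReal_sin,
    Real.cos_pi_div_four, Real.sin_pi_div_four]
  linear_combination ((√2 / 2 : ℝ) * sinh t : ℂ) * I_sq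

lemma neg_coth_pi_mul_I_div_four_add {t : ℂ} (ht : cosh t ≠ 0) :
    -(cosh (π * I / 4 + t) / sinh (π * I / 4 + t)) = (I - tanh t) / (1 - I * tanh t) := by
  have ha : ((√2 / 2 : ℝ) : ℂ) * I ≠ 0 :=
    mul_ne_zero (by exact_mod_cast (by positivity : (√2 / 2 : ℝ) ≠ 0)) I_ne_zero
  calc -(cosh (π * I / 4 + t) / sinh (π * I / 4 + t))
      = (I * cosh t - sinh t) / (cosh t - I * sinh t) := by
        rw [cosh_pi_mul_I_div_four_add, sinh_pi_mul_I_div_four_add, ← neg_div,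
          ← mul_div_mul_left (I * cosh t - sinh t) _ ha]
        congr 1
        linear_combination (-(√2 / 2 : ℝ) * cosh t : ℂ) * I_sq
    _ = (I - tanh t) / (1 - I * tanh t) := by
        rw [Complex.tanh_eq_sinh_div_cosh, ← mul_div_mul_right (I - sinh t / cosh t) _ ht]
        congr 1 <;> field_simp

lemma two_eta_mul_sub_two_omega_mul_zeta_div_eq_neg (z K : ℂ) :
    (2 * (-(π * I / 6)) * z - 2 * (π * I / 2) * (-z / 3 + K)) / (π * I) = -K := by
  have : (π : ℂ) * I ≠ 0 := mul_ne_zero (ofReal_ne_zero.mpr pi_ne_zero) I_ne_zero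
  field_simp
  ring

lemma norm_I_sub_div_one_sub_I_mul (x : ℝ) : ‖(I - x) / (1 - I * x)‖ = 1 := by
  have hne : (1 : ℂ) - I * x ≠ 0 := fun h => by simpa using congrArg re h
  have hconj : (I : ℂ) - x = I * (starRingEnd ℂ) (1 - I * x) := by
    simp only [map_sub, map_one, map_mul, conj_I, conj_ofReal]
    linear_combination (-x : ℂ) * I_sq
  rw [norm_div, hconj, norm_mul, norm_I, norm_conj, one_mul, div_self (norm_ne_zero_iff.mpr hne)]

/-- In the degenerate limit, with `ζ(z) = -z/3 + coth z`, `ω' = πi/2`,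
`η' = -πi/6` and `z₊ = πi/4 + t`, the modulus
`τ̃ = (2η'z₊ - 2ω'ζ(z₊))/(πi)` equals `(i - tanh t)/(1 - i·tanh t)`, which lies
on the unit circle. -/
theorem stmt_16 (t : ℝ) :
    (let zp : ℂ := Real.pi * Complex.I / 4 + t
     (2 * (-(Real.pi * Complex.I / 6)) * zp -
        2 * (Real.pi * Complex.I / 2) *
          (-zp / 3 + Complex.cosh zp / Complex.sinh zp)) /
        (Real.pi * Complex.I) =
      (Complex.I - Real.tanh t) / (1 - Complex.I * Real.tanh t)) ∧
    ‖(Complex.I - Real.tanh t) / (1 - Complex.I * Real.tanh t)‖ = 1 := by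
  refine ⟨?_, norm_I_sub_div_one_sub_I_mul _⟩
  intro zp
  rw [two_eta_mul_sub_two_omega_mul_zeta_div_eq_neg, ofReal_tanh]
  exact neg_coth_pi_mul_I_div_four_add (by exact_mod_cast (Real.cosh_pos t).ne')
end
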